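/- arXiv:1906.05171 — 8 statements merged into one kernel-verified Lean document; each statement's English description precedes it below -/
import Mathlib

section
/- Let Λ be a countable index set and A = (a_{σ,k}) with a_{σ,k} > 0 and a_{σ,k} ≤ a_{σ,k+1} for all σ ∈ Λ, k ∈ ℕ. If for every k ∈ ℕ there exists m ≥ k with ∑_{σ∈Λ} a_{σ,k}/a_{σ,m} < ∞, then every c = (c_σ) with sup_σ |c_σ| a_{σ,m} < ∞ for all m satisfies |c_σ| a_{σ,k} → 0 as σ → ∞ (along the filter of cofinite subsets), i.e. λ^∞(A) = c₀(A). -/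
theorem stmt_5 (Λ : Type*) [Countable Λ] (a : Λ → ℕ → ℝ)
    (hpos : ∀ σ k, 0 < a σ k) (hmono : ∀ σ k, a σ k ≤ a σ (k + 1))
    (hGP : ∀ k : ℕ, ∃ m : ℕ, k ≤ m ∧ Summable (fun σ => a σ k / a σ m)) :
    ∀ c : Λ → ℝ, (∀ m : ℕ, ∃ C : ℝ, ∀ σ, |c σ| * a σ m ≤ C) →
      ∀ k : ℕ, Filter.Tendsto (fun σ => |c σ| * a σ k) Filter.cofinite (nhds 0) := by
  intro c hc k
  obtain ⟨m, hkm, hsum⟩ := hGP k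
  obtain ⟨C, hC⟩ := hc m
  have htend : Filter.Tendsto (fun σ => C * (a σ k / a σ m)) Filter.cofinite (nhds 0) := by
    simpa using (hsum.tendsto_cofinite_zero.const_mul C)
  apply squeeze_zero (fun σ => mul_nonneg (abs_nonneg _) (hpos σ k).le) _ htend
  intro σ
  have hm : a σ k ≤ a σ m := monotone_nat_of_le_succ (hmono σ) hkm
  have h1 : (|c σ| * a σ m) * (a σ k / a σ m) = |c σ| * a σ k := by
    field_simp
    rw [mul_right_comm]
    exact mul_div_cancel_right₀ _ (hpos σ m).ne'
  rw [← h1]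
  exact (mul_le_mul_of_nonneg_right (hC σ)
    (div_nonneg (hpos σ k).le (hpos σ m).le))
end

section
/- Let Λ be a countable index set and A a Köthe matrix with positive increasing columns satisfying: for every k there exists m ≥ k with ∑_{σ∈Λ} a_{σ,k}/a_{σ,m} < ∞. Then λ¹(A) is dense in c₀(A) with respect to every seminorm ‖c‖_k = sup_σ |c_σ| a_{σ,k}; in particular the finitely supported sequences are dense in c₀(A). -/
theorem stmt_6 (Λ : Type*) [Countable Λ] (a : Λ → ℕ → ℝ)
    (hpos : ∀ σ k, 0 < a σ k) (hmono : ∀ σ k, a σ k ≤ a σ (k + 1))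
    (hGP : ∀ k : ℕ, ∃ m : ℕ, k ≤ m ∧ Summable (fun σ => a σ k / a σ m)) :
    ∀ c : Λ → ℝ,
      (∀ k : ℕ, Filter.Tendsto (fun σ => |c σ| * a σ k) Filter.cofinite (nhds 0)) →
      ∀ k : ℕ, ∀ ε > (0:ℝ), ∃ c' : Λ → ℝ,
        (Set.Finite {σ | c' σ ≠ 0}) ∧
        (∀ j : ℕ, Summable (fun σ => |c' σ| * a σ j)) ∧
        (∀ σ, |c σ - c' σ| * a σ k ≤ ε) := by
  intro c hc k ε hε
  classical
  have hev : ∀ᶠ σ in Filter.cofinite, |c σ| * a σ k < ε :=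
    (hc k).eventually_lt_const hε
  have hfin : {σ | ¬ |c σ| * a σ k < ε}.Finite := by
    simpa [Filter.eventually_cofinite] using hev
  refine ⟨fun σ => if ε ≤ |c σ| * a σ k then c σ else 0, ?_, ?_, ?_⟩
  · apply hfin.subset
    intro σ hσ
    simp only [Set.mem_setOf_eq, ne_eq, ite_eq_right_iff, not_forall] at hσ
    simp [Set.mem_setOf_eq, not_lt, hσ.1]
  · intro j
    apply summable_of_ne_finset_zero (s := hfin.toFinset)
    intro σ hσ
    have : |c σ| * a σ k < ε := by
      by_contra h
      exact hσ (hfin.mem_toFinset.2 h)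
    simp [not_le.2 this]
  · intro σ
    by_cases h : ε ≤ |c σ| * a σ k
    · simp [h, (hpos σ k).le, hε.le]
    · have := not_le.1 h
      simpa [h] using this.le
end

section
/- Let ω: [0,∞) → [0,∞) satisfy ω(t₁+t₂) ≤ L(ω(t₁)+ω(t₂)+1) for all t₁,t₂ ≥ 0, with L ≥ 1. For λ ≥ 0 and measurable F, G: ℝ^n → [0,∞), if ‖F·e^{λLω(|·|)}‖_∞ < ∞ and ‖G·e^{λLω(|·|)}‖_{L¹} < ∞, then ‖(F*G)·e^{λω(|·|)}‖_∞ ≤ e^{λL} ‖F·e^{λLω(|·|)}‖_∞ ‖G·e^{λLω(|·|)}‖_{L¹}. -/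
open MeasureTheory

theorem stmt_7 (n : ℕ) (ω : ℝ → ℝ) (hωnonneg : ∀ t, 0 ≤ ω t) (hmono : MonotoneOn ω (Set.Ici 0))
    (L : ℝ) (hL : 1 ≤ L)
    (hsub : ∀ t₁ ≥ (0:ℝ), ∀ t₂ ≥ (0:ℝ), ω (t₁ + t₂) ≤ L * (ω t₁ + ω t₂ + 1))
    (lam : ℝ) (hlam : 0 ≤ lam)
    (F G : EuclideanSpace ℝ (Fin n) → ℝ)
    (hFmeas : Measurable F) (hGmeas : Measurable G)
    (hFpos : ∀ x, 0 ≤ F x) (hGpos : ∀ x, 0 ≤ G x)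
    (A : ℝ) (hFbd : ∀ x, F x * Real.exp (lam * L * ω ‖x‖) ≤ A)
    (hGint : Integrable (fun y => G y * Real.exp (lam * L * ω ‖y‖))) :
    ∀ x, (∫ y, F (x - y) * G y) * Real.exp (lam * ω ‖x‖) ≤
      Real.exp (lam * L) * A * ∫ y, G y * Real.exp (lam * L * ω ‖y‖) := by
  intro x
  have hA : 0 ≤ A :=
    le_trans (mul_nonneg (hFpos 0) (Real.exp_nonneg _)) (hFbd 0)
  have key : ∀ y, F (x - y) * G y * Real.exp (lam * ω ‖x‖) ≤
      Real.exp (lam * L) * A * (G y * Real.exp (lam * L * ω ‖y‖)) := by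
    intro y
    have hnorm : ‖x‖ ≤ ‖x - y‖ + ‖y‖ := by
      calc ‖x‖ = ‖(x - y) + y‖ := by rw [sub_add_cancel]
        _ ≤ ‖x - y‖ + ‖y‖ := norm_add_le _ _
    have hω : ω ‖x‖ ≤ L * (ω ‖x - y‖ + ω ‖y‖ + 1) := by
      refine le_trans (hmono (Set.mem_Ici.2 (norm_nonneg x))
        (Set.mem_Ici.2 (by positivity)) hnorm) ?_
      exact hsub _ (norm_nonneg _) _ (norm_nonneg _)
    have hexp : Real.exp (lam * ω ‖x‖) ≤
        Real.exp (lam * L * ω ‖x - y‖) * Real.exp (lam * L * ω ‖y‖) *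
          Real.exp (lam * L) := by
      rw [← Real.exp_add, ← Real.exp_add]
      apply Real.exp_le_exp.2
      have := mul_le_mul_of_nonneg_left hω hlam
      nlinarith
    calc F (x - y) * G y * Real.exp (lam * ω ‖x‖)
        ≤ F (x - y) * G y *
          (Real.exp (lam * L * ω ‖x - y‖) * Real.exp (lam * L * ω ‖y‖) *
            Real.exp (lam * L)) := by
          apply mul_le_mul_of_nonneg_left hexp (mul_nonneg (hFpos _) (hGpos _))
      _ = (F (x - y) * Real.exp (lam * L * ω ‖x - y‖)) *
            (G y * Real.exp (lam * L * ω ‖y‖)) * Real.exp (lam * L) := by ring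
      _ ≤ A * (G y * Real.exp (lam * L * ω ‖y‖)) * Real.exp (lam * L) := by
          apply mul_le_mul_of_nonneg_right _ (Real.exp_nonneg _)
          exact mul_le_mul_of_nonneg_right (hFbd _)
            (mul_nonneg (hGpos _) (Real.exp_nonneg _))
      _ = Real.exp (lam * L) * A * (G y * Real.exp (lam * L * ω ‖y‖)) := by ring
  calc (∫ y, F (x - y) * G y) * Real.exp (lam * ω ‖x‖)
      = ∫ y, F (x - y) * G y * Real.exp (lam * ω ‖x‖) := (integral_mul_const _ _).symm
    _ ≤ ∫ y, Real.exp (lam * L) * A * (G y * Real.exp (lam * L * ω ‖y‖)) := by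
        apply integral_mono_of_nonneg
        · exact Filter.Eventually.of_forall fun y => mul_nonneg (mul_nonneg (hFpos _) (hGpos _)) (Real.exp_nonneg _)
        · exact hGint.const_mul _
        · exact Filter.Eventually.of_forall key
    _ = Real.exp (lam * L) * A * ∫ y, G y * Real.exp (lam * L * ω ‖y‖) :=
        integral_const_mul _ _
end

section
/- Let ω: [0,∞) → [0,∞) satisfy ω(t₁+t₂) ≤ L(ω(t₁)+ω(t₂)+1), L ≥ 1, and let λ < 0. For measurable F, G: ℝ^n → [0,∞) with ‖F·e^{(λ/L)ω(|·|)}‖_∞ < ∞ and ‖G·e^{|λ|ω(|·|)}‖_{L¹} < ∞, there is a constant C_λ > 0 (depending only on λ, L) such that ‖(F*G)·e^{λω(|·|)}‖_∞ ≤ C_λ ‖F·e^{(λ/L)ω(|·|)}‖_∞ ‖G·e^{|λ|ω(|·|)}‖_{L¹}. -/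
open MeasureTheory

theorem stmt_8 (n : ℕ) (ω : ℝ → ℝ) (hωnonneg : ∀ t, 0 ≤ ω t) (hmono : MonotoneOn ω (Set.Ici 0))
    (L : ℝ) (hL : 1 ≤ L)
    (hsub : ∀ t₁ ≥ (0:ℝ), ∀ t₂ ≥ (0:ℝ), ω (t₁ + t₂) ≤ L * (ω t₁ + ω t₂ + 1))
    (lam : ℝ) (hlam : lam < 0) :
    ∃ C > (0:ℝ), ∀ F G : EuclideanSpace ℝ (Fin n) → ℝ,
      Measurable F → Measurable G → (∀ x, 0 ≤ F x) → (∀ x, 0 ≤ G x) →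
      ∀ A : ℝ, (∀ x, F x * Real.exp ((lam / L) * ω ‖x‖) ≤ A) →
      Integrable (fun y => G y * Real.exp (|lam| * ω ‖y‖)) →
      ∀ x, (∫ y, F (x - y) * G y) * Real.exp (lam * ω ‖x‖) ≤
        C * A * ∫ y, G y * Real.exp (|lam| * ω ‖y‖) := by
  have hL0 : (0:ℝ) < L := lt_of_lt_of_le one_pos hL
  refine ⟨Real.exp |lam|, Real.exp_pos _, ?_⟩
  intro F G hF hG hFnn hGnn A hA hGint x
  have hA0 : 0 ≤ A :=
    le_trans (mul_nonneg (hFnn 0) (Real.exp_pos _).le) (hA 0)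
  set I := ∫ y, G y * Real.exp (|lam| * ω ‖y‖) with hI
  have hI0 : 0 ≤ I :=
    integral_nonneg fun y => mul_nonneg (hGnn y) (Real.exp_pos _).le
  -- pointwise bound
  have key : ∀ y, F (x - y) * G y ≤
      (Real.exp |lam| * A * Real.exp (-(lam * ω ‖x‖))) *
        (G y * Real.exp (|lam| * ω ‖y‖)) := by
    intro y
    have hFxy : F (x - y) ≤ A * Real.exp (-((lam / L) * ω ‖x - y‖)) := by
      have := hA (x - y)
      have hexp : (0:ℝ) < Real.exp ((lam / L) * ω ‖x - y‖) := Real.exp_pos _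
      calc F (x - y) = (F (x - y) * Real.exp ((lam / L) * ω ‖x - y‖)) *
            Real.exp (-((lam / L) * ω ‖x - y‖)) := by
            rw [mul_assoc, ← Real.exp_add]; simp
        _ ≤ A * Real.exp (-((lam / L) * ω ‖x - y‖)) := by
            exact mul_le_mul_of_nonneg_right this (Real.exp_pos _).le
    have hω1 : ω ‖x - y‖ ≤ L * (ω ‖x‖ + ω ‖y‖ + 1) := by
      have h1 : ω ‖x - y‖ ≤ ω (‖x‖ + ‖y‖) :=
        hmono (Set.mem_Ici.mpr (norm_nonneg _)) (Set.mem_Ici.mpr (by positivity)) (norm_sub_le x y)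
      exact h1.trans (hsub _ (norm_nonneg _) _ (norm_nonneg _))
    have habs : |lam| = -lam := abs_of_neg hlam
    have hexp_le : -((lam / L) * ω ‖x - y‖) ≤
        |lam| + |lam| * ω ‖y‖ + -(lam * ω ‖x‖) := by
      have h2 : (|lam| / L) * ω ‖x - y‖ ≤ (|lam| / L) * (L * (ω ‖x‖ + ω ‖y‖ + 1)) :=
        mul_le_mul_of_nonneg_left hω1 (by positivity)
      have h3 : (|lam| / L) * (L * (ω ‖x‖ + ω ‖y‖ + 1)) =
          |lam| * ω ‖x‖ + |lam| * ω ‖y‖ + |lam| := by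
        field_simp
      have h4 : -((lam / L) * ω ‖x - y‖) = (|lam| / L) * ω ‖x - y‖ := by
        rw [habs]; ring
      rw [h4]
      calc (|lam| / L) * ω ‖x - y‖ ≤ |lam| * ω ‖x‖ + |lam| * ω ‖y‖ + |lam| :=
            h2.trans_eq h3
        _ = |lam| + |lam| * ω ‖y‖ + -(lam * ω ‖x‖) := by rw [habs]; ring
    calc F (x - y) * G y ≤ (A * Real.exp (-((lam / L) * ω ‖x - y‖))) * G y :=
          mul_le_mul_of_nonneg_right hFxy (hGnn y)
      _ ≤ (A * Real.exp (|lam| + |lam| * ω ‖y‖ + -(lam * ω ‖x‖))) * G y := by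
          exact mul_le_mul_of_nonneg_right
            (mul_le_mul_of_nonneg_left (Real.exp_le_exp.mpr hexp_le) hA0) (hGnn y)
      _ = (Real.exp |lam| * A * Real.exp (-(lam * ω ‖x‖))) *
            (G y * Real.exp (|lam| * ω ‖y‖)) := by
          rw [Real.exp_add, Real.exp_add]; ring
  -- integrate the bound
  have hbnd : (∫ y, F (x - y) * G y) ≤
      (Real.exp |lam| * A * Real.exp (-(lam * ω ‖x‖))) * I := by
    have hint : Integrable (fun y =>
        (Real.exp |lam| * A * Real.exp (-(lam * ω ‖x‖))) *
          (G y * Real.exp (|lam| * ω ‖y‖))) := hGint.const_mul _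
    have := integral_mono_of_nonneg
      (f := fun y => F (x - y) * G y)
      (g := fun y => (Real.exp |lam| * A * Real.exp (-(lam * ω ‖x‖))) *
        (G y * Real.exp (|lam| * ω ‖y‖)))
      (Filter.Eventually.of_forall fun y => mul_nonneg (hFnn _) (hGnn y))
      hint (Filter.Eventually.of_forall key)
    calc (∫ y, F (x - y) * G y) ≤ ∫ y,
        (Real.exp |lam| * A * Real.exp (-(lam * ω ‖x‖))) *
          (G y * Real.exp (|lam| * ω ‖y‖)) := this
      _ = (Real.exp |lam| * A * Real.exp (-(lam * ω ‖x‖))) * I := by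
          rw [integral_const_mul]
  calc (∫ y, F (x - y) * G y) * Real.exp (lam * ω ‖x‖)
      ≤ ((Real.exp |lam| * A * Real.exp (-(lam * ω ‖x‖))) * I) *
          Real.exp (lam * ω ‖x‖) :=
        mul_le_mul_of_nonneg_right hbnd (Real.exp_pos _).le
    _ = Real.exp |lam| * A * I *
          (Real.exp (-(lam * ω ‖x‖)) * Real.exp (lam * ω ‖x‖)) := by ring
    _ = Real.exp |lam| * A * I := by rw [← Real.exp_add]; simp
end

section
/- Let (M_p)_{p≥0} be a sequence of positive reals with M_p^{1/p} → ∞ and M_p² ≤ M_{p−1}M_{p+1} for all p ≥ 1 (log-convexity, (M1)). Define the associated function M(t) := sup_{p≥1} log(t^p M₀ / M_p) for t > 0. Then for h > h' > 0, exp(M(t/h) − M(t/h')) → 0 as t → ∞. -/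
open Real Filter

-- helper: the sup defining Mf is attained
lemma aux_max (M : ℕ → ℝ) (hpos : ∀ p, 0 < M p)
    (hgrow : Tendsto (fun p : ℕ => M p ^ (1 / (p : ℝ))) atTop atTop)
    (s : ℝ) (hs : 0 < s) :
    ∃ p : ℕ, 1 ≤ p ∧ ∀ q : ℕ, 1 ≤ q →
      Real.log (s ^ q * M 0 / M q) ≤ Real.log (s ^ p * M 0 / M p) := by
  set f : ℕ → ℝ := fun q => Real.log (s ^ q * M 0 / M q) with hf
  have h1 : ∀ᶠ q : ℕ in atTop, 2 * s + 1 ≤ M q ^ (1 / (q : ℝ)) :=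
    hgrow.eventually_ge_atTop _
  have hlog2 : Real.log (1/2) < 0 := Real.log_neg (by norm_num) (by norm_num)
  have h2 : Tendsto (fun q : ℕ => Real.log (M 0) + (q:ℝ) * Real.log (1/2)) atTop atBot := by
    apply tendsto_atBot_add_const_left
    exact Tendsto.atTop_mul_const_of_neg hlog2 tendsto_natCast_atTop_atTop
  have h4 : ∀ᶠ q : ℕ in atTop, f q < f 1 := by
    filter_upwards [h1, h2.eventually (eventually_lt_atBot (f 1)), eventually_ge_atTop 1]
      with q hq1 hq2 hq3
    have hM0p := hpos 0
    have hMqp := hpos q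
    have hqR : (q:ℝ) ≠ 0 := by positivity
    have hMq : (2*s+1)^q ≤ M q := by
      have hid : ((M q) ^ (1/(q:ℝ)))^(q:ℕ) = M q := by
        rw [← Real.rpow_natCast ((M q) ^ (1/(q:ℝ))) q, ← Real.rpow_mul (hpos q).le,
          one_div_mul_cancel hqR, Real.rpow_one]
      calc (2*s+1)^q ≤ ((M q) ^ (1/(q:ℝ)))^q := pow_le_pow_left₀ (by linarith) hq1 q
        _ = M q := hid
    have hle : s ^ q * M 0 / M q ≤ M 0 * (1/2)^q := by
      have h5 : s ^ q * M 0 / M q ≤ s ^ q * M 0 / (2*s+1)^q :=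
        div_le_div_of_nonneg_left (by positivity) (by positivity) hMq
      have h6 : s ^ q * M 0 / (2*s+1)^q = M 0 * (s/(2*s+1))^q := by
        rw [div_pow]; ring
      have h7 : (s/(2*s+1))^q ≤ (1/2:ℝ)^q := by
        apply pow_le_pow_left₀ (by positivity)
        rw [div_le_div_iff₀ (by linarith) (by norm_num)]; linarith
      calc s ^ q * M 0 / M q ≤ M 0 * (s/(2*s+1))^q := h5.trans (le_of_eq h6)
        _ ≤ M 0 * (1/2)^q := by
            exact mul_le_mul_of_nonneg_left h7 (hpos 0).le
    calc f q ≤ Real.log (M 0 * (1/2)^q) := Real.log_le_log (by positivity) hle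
      _ = Real.log (M 0) + (q:ℝ) * Real.log (1/2) := by
          rw [Real.log_mul (ne_of_gt (hpos 0)) (by positivity), Real.log_pow]
      _ < f 1 := hq2
  obtain ⟨Q, hQ⟩ := eventually_atTop.mp h4
  set R := max Q 1 with hR
  have hmem : (1:ℕ) ∈ Finset.Icc 1 R := Finset.mem_Icc.mpr ⟨le_refl 1, le_max_right _ _⟩
  obtain ⟨p, hpmem, hpmax⟩ := Finset.exists_max_image (Finset.Icc 1 R) f ⟨1, hmem⟩
  obtain ⟨hp1, hpR⟩ := Finset.mem_Icc.mp hpmem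
  refine ⟨p, hp1, fun q hq => ?_⟩
  by_cases hqR : q ≤ R
  · exact hpmax q (Finset.mem_Icc.mpr ⟨hq, hqR⟩)
  · have : f q < f 1 := hQ q (le_trans (le_max_left _ _) (le_of_not_ge hqR))
    exact this.le.trans (hpmax 1 hmem)

lemma flog (M : ℕ → ℝ) (hpos : ∀ p, 0 < M p) (s : ℝ) (hs : 0 < s) (q : ℕ) :
    Real.log (s ^ q * M 0 / M q)
      = (q:ℝ) * Real.log s + Real.log (M 0) - Real.log (M q) := by
  have hM0 := hpos 0
  have hMq := hpos q
  rw [Real.log_div (by positivity) (ne_of_gt hMq),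
    Real.log_mul (by positivity) (ne_of_gt hM0), Real.log_pow]

theorem stmt_12 (M : ℕ → ℝ) (hpos : ∀ p, 0 < M p)
    (hgrow : Filter.Tendsto (fun p : ℕ => M p ^ (1 / (p : ℝ))) Filter.atTop Filter.atTop)
    (hM1 : ∀ p : ℕ, 1 ≤ p → M p ^ 2 ≤ M (p - 1) * M (p + 1))
    (Mf : ℝ → ℝ)
    (hMf : ∀ t > (0:ℝ), Mf t = sSup {x | ∃ p : ℕ, 1 ≤ p ∧ x = Real.log (t ^ p * M 0 / M p)}) :
    ∀ h h' : ℝ, 0 < h' → h' < h →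
      Filter.Tendsto (fun t => Real.exp (Mf (t / h) - Mf (t / h'))) Filter.atTop (nhds 0) := by
  intro h h' hh'0 hlt
  have hh : 0 < h := hh'0.trans hlt
  set L := Real.log (h / h') with hLdef
  have hL : 0 < L := Real.log_pos (by rw [lt_div_iff₀ hh'0]; linarith)
  have key : Filter.Tendsto (fun t => Mf (t/h) - Mf (t/h')) atTop atBot := by
    rw [tendsto_atBot]
    intro b
    set N : ℕ := max 1 ⌈(-b)/L⌉₊ with hNdef
    have hN1 : 1 ≤ N := le_max_left _ _
    have hNb : -b ≤ (N:ℝ) * L := by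
      have h1 : (-b)/L ≤ (N:ℝ) :=
        le_trans (Nat.le_ceil _) (Nat.cast_le.mpr (le_max_right _ _))
      exact (div_le_iff₀ hL).mp h1
    have hmem1 : (1:ℕ) ∈ Finset.Icc 1 N := Finset.mem_Icc.mpr ⟨le_refl 1, hN1⟩
    set C : ℝ := (Finset.Icc 1 N).sup' ⟨1, hmem1⟩
      (fun p => Real.log (M (N+1)) - Real.log (M p)) with hCdef
    filter_upwards [eventually_ge_atTop (h * max 1 (Real.exp (C+1)))] with t ht
    have hmax1 : (1:ℝ) ≤ max 1 (Real.exp (C+1)) := le_max_left _ _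
    have ht0 : 0 < t := lt_of_lt_of_le (by nlinarith) ht
    have hs : max 1 (Real.exp (C+1)) ≤ t / h := by
      rw [le_div_iff₀ hh]; linarith [ht]
    have hs1 : (1:ℝ) ≤ t/h := le_trans (le_max_left _ _) hs
    have hspos : 0 < t/h := by linarith
    have hlogs0 : 0 ≤ Real.log (t/h) := Real.log_nonneg hs1
    have hlogsC : C + 1 ≤ Real.log (t/h) := by
      rw [← Real.log_exp (C+1)]
      exact Real.log_le_log (Real.exp_pos _) (le_trans (le_max_right _ _) hs)
    obtain ⟨p, hp1, hpmax⟩ := aux_max M hpos hgrow (t/h) hspos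
    -- the maximizer is large
    have hclaim : ∀ p' ∈ Finset.Icc 1 N,
        Real.log ((t/h) ^ p' * M 0 / M p') < Real.log ((t/h) ^ (N+1) * M 0 / M (N+1)) := by
      intro p' hp'
      obtain ⟨hp'1, hp'N⟩ := Finset.mem_Icc.mp hp'
      rw [flog M hpos _ hspos, flog M hpos _ hspos]
      have hC : Real.log (M (N+1)) - Real.log (M p') ≤ C :=
        Finset.le_sup' (fun p => Real.log (M (N+1)) - Real.log (M p)) hp'
      have hcast : (p':ℝ) + 1 ≤ ((N:ℝ) + 1) := by
        have : (p':ℝ) ≤ N := Nat.cast_le.mpr hp'N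
        linarith
      push_cast
      nlinarith [mul_le_mul_of_nonneg_right hcast hlogs0]
    have hpN : N ≤ p := by
      by_contra hcon
      push_neg at hcon
      have hpIcc : p ∈ Finset.Icc 1 N := Finset.mem_Icc.mpr ⟨hp1, hcon.le⟩
      exact absurd (lt_of_lt_of_le (hclaim p hpIcc) (hpmax (N+1) (by omega))) (lt_irrefl _)
    -- sup at t/h equals value at p
    have hMfs : Mf (t/h) = Real.log ((t/h) ^ p * M 0 / M p) := by
      rw [hMf (t/h) hspos]
      apply le_antisymm
      · refine csSup_le ⟨Real.log ((t/h) ^ 1 * M 0 / M 1), 1, le_refl 1, rfl⟩ ?_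
        rintro x ⟨q, hq, rfl⟩
        exact hpmax q hq
      · exact le_csSup ⟨_, by rintro x ⟨q, hq, rfl⟩; exact hpmax q hq⟩ ⟨p, hp1, rfl⟩
    have hs'pos : 0 < t/h' := by positivity
    obtain ⟨q', hq'1, hq'max⟩ := aux_max M hpos hgrow (t/h') hs'pos
    have hMfs' : Real.log ((t/h') ^ p * M 0 / M p) ≤ Mf (t/h') := by
      rw [hMf (t/h') hs'pos]
      exact le_csSup ⟨_, by rintro x ⟨q, hq, rfl⟩; exact hq'max q hq⟩ ⟨p, hp1, rfl⟩
    have hdiff : Real.log ((t/h') ^ p * M 0 / M p)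
        = Real.log ((t/h) ^ p * M 0 / M p) + (p:ℝ) * L := by
      rw [flog M hpos _ hs'pos, flog M hpos _ hspos,
        Real.log_div (ne_of_gt ht0) (ne_of_gt hh'0),
        Real.log_div (ne_of_gt ht0) (ne_of_gt hh), hLdef,
        Real.log_div (ne_of_gt hh) (ne_of_gt hh'0)]
      ring
    have hpL : (N:ℝ) * L ≤ (p:ℝ) * L :=
      mul_le_mul_of_nonneg_right (Nat.cast_le.mpr hpN) hL.le
    linarith
  have : (fun t => Real.exp (Mf (t/h) - Mf (t/h')))
      = Real.exp ∘ (fun t => Mf (t/h) - Mf (t/h')) := rfl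
  rw [this]
  exact Real.tendsto_exp_atBot.comp key
end

section
/- Let M: (0,∞) → [0,∞) satisfy: there exists H > 1 with M(t) + log t ≤ M(Ht) + H for all t > 0, and M is increasing. Then for every k ∈ ℕ there exists m ∈ ℕ, m ≥ k, such that ∑_{γ∈ℕ₀^d} exp(M(k|γ|^{1/2}) − M(m|γ|^{1/2})) < ∞. -/
open Real Finset

set_option maxHeartbeats 1000000

lemma summable_pi_prod {f : ℕ → ℝ} (hf0 : ∀ n, 0 ≤ f n) (hf : Summable f) :
    ∀ d : ℕ, Summable (fun γ : Fin d → ℕ => ∏ i, f (γ i)) := by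
  intro d
  induction d with
  | zero =>
      haveI : Finite (Fin 0 → ℕ) := Finite.of_subsingleton
      exact Summable.of_finite
  | succ n ih =>
      have h : Summable (fun p : ℕ × (Fin n → ℕ) => f p.1 * ∏ i, f (p.2 i)) :=
        Summable.mul_of_nonneg (f := f) (g := fun γ : Fin n → ℕ => ∏ i, f (γ i)) hf ih
          (fun x => hf0 x) (fun x => Finset.prod_nonneg fun i _ => hf0 _)
      have := h.comp_injective (Fin.consEquiv (fun _ : Fin (n + 1) => ℕ)).symm.injective
      refine this.congr fun γ => ?_
      simp [Function.comp, Fin.consEquiv, Fin.prod_univ_succ, Fin.tail]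

lemma iter_bound (M : ℝ → ℝ) (H : ℝ) (hH : 1 < H)
    (hst : ∀ t > (0:ℝ), M t + Real.log t ≤ M (H * t) + H) :
    ∀ n : ℕ, ∀ t : ℝ, 1 ≤ t → M t + n * Real.log t ≤ M (H ^ n * t) + n * H := by
  intro n
  induction n with
  | zero => intro t ht; simp
  | succ n ih =>
      intro t ht
      have ht0 : (0:ℝ) < t := lt_of_lt_of_le one_pos ht
      have h1 : M t + Real.log t ≤ M (H * t) + H := hst t ht0
      have hHt : (1:ℝ) ≤ H * t := by nlinarith
      have h2 : M (H * t) + n * Real.log (H * t) ≤ M (H ^ n * (H * t)) + n * H := ih _ hHt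
      have hlog : Real.log t ≤ Real.log (H * t) := by
        apply Real.log_le_log ht0; nlinarith
      have hpow : H ^ n * (H * t) = H ^ (n + 1) * t := by ring
      have hn : (n:ℝ) * Real.log t ≤ n * Real.log (H * t) :=
        mul_le_mul_of_nonneg_left hlog (by positivity)
      push_cast
      rw [← hpow]
      nlinarith

theorem stmt_14 (d : ℕ) (hd : 1 ≤ d) (M : ℝ → ℝ)
    (hmono : MonotoneOn M (Set.Ioi 0)) (H : ℝ) (hH : 1 < H)
    (hst : ∀ t > (0:ℝ), M t + Real.log t ≤ M (H * t) + H) :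
    ∀ k : ℕ, 1 ≤ k → ∃ m : ℕ, k ≤ m ∧
      Summable (fun γ : Fin d → ℕ =>
        Real.exp (M ((k : ℝ) * Real.sqrt (∑ i, (γ i : ℝ))) -
          M ((m : ℝ) * Real.sqrt (∑ i, (γ i : ℝ))))) := by
  intro k hk
  set n := 4 * d with hn
  refine ⟨k * ⌈H ^ n⌉₊, ?_, ?_⟩
  · have : 1 ≤ ⌈H ^ n⌉₊ := Nat.one_le_ceil_iff.mpr (by positivity)
    calc k = k * 1 := (mul_one k).symm
    _ ≤ k * ⌈H ^ n⌉₊ := Nat.mul_le_mul_left k this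
  set m := k * ⌈H ^ n⌉₊ with hm
  -- summable majorant
  have hfs : Summable (fun j : ℕ => 1 / ((j:ℝ) + 1) ^ 2) := by
    have := (summable_nat_add_iff (f := fun j : ℕ => 1 / (j:ℝ) ^ 2) 1).mpr
      ((Real.summable_one_div_nat_pow).mpr one_lt_two)
    exact this.congr fun j => by push_cast; ring_nf
  have hgsum : Summable (fun γ : Fin d → ℕ => ∏ i, (1 / ((γ i : ℝ) + 1) ^ 2)) :=
    summable_pi_prod (fun j => by positivity) hfs d
  have hC : Summable (fun γ : Fin d → ℕ =>
      Real.exp (n * H) * 2 ^ (2 * d) * ∏ i, (1 / ((γ i : ℝ) + 1) ^ 2)) :=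
    hgsum.mul_left _
  refine Summable.of_nonneg_of_le (fun γ => (Real.exp_pos _).le) (fun γ => ?_) hC
  -- bound each term
  by_cases h0 : ∀ i, γ i = 0
  · have hs : (∑ i, (γ i : ℝ)) = 0 := by
      apply Finset.sum_eq_zero; intro i _; simp [h0 i]
    rw [hs]
    simp only [Real.sqrt_zero, mul_zero, sub_self, Real.exp_zero]
    have h1 : (1:ℝ) ≤ Real.exp (n * H) := by
      rw [Real.one_le_exp_iff]; positivity
    have h2 : ∀ i ∈ Finset.univ (α := Fin d), (1:ℝ) / ((γ i : ℝ) + 1) ^ 2 = 1 := by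
      intro i _; simp [h0 i]
    rw [Finset.prod_congr rfl h2, Finset.prod_const_one, mul_one]
    calc (1:ℝ) ≤ Real.exp (n * H) := h1
    _ ≤ Real.exp (n * H) * 2 ^ (2 * d) := le_mul_of_one_le_right (by positivity) (one_le_pow₀ (by norm_num))
  · push_neg at h0
    obtain ⟨i0, hi0⟩ := h0
    set S : ℕ := ∑ i, γ i with hS
    have hS1 : 1 ≤ S := by
      calc 1 ≤ γ i0 := Nat.one_le_iff_ne_zero.mpr hi0
      _ ≤ S := Finset.single_le_sum (f := fun i => γ i) (fun i _ => Nat.zero_le _) (Finset.mem_univ i0)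
    have hSr : (∑ i, (γ i : ℝ)) = (S : ℝ) := by push_cast [hS]; ring
    have hSr1 : (1:ℝ) ≤ (S:ℝ) := by exact_mod_cast hS1
    have hsq1 : (1:ℝ) ≤ Real.sqrt S := by
      rw [show (1:ℝ) = Real.sqrt 1 from (Real.sqrt_one).symm]
      exact Real.sqrt_le_sqrt hSr1
    have hk1 : (1:ℝ) ≤ (k:ℝ) := by exact_mod_cast hk
    have ht1 : (1:ℝ) ≤ (k:ℝ) * Real.sqrt S := by nlinarith
    -- iterate
    have hit := iter_bound M H hH hst n _ ht1
    -- monotonicity : H^n * (k √S) ≤ m √S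
    have hman : H ^ n * ((k:ℝ) * Real.sqrt S) ≤ (m:ℝ) * Real.sqrt S := by
      have hceil : H ^ n ≤ (⌈H ^ n⌉₊ : ℝ) := Nat.le_ceil _
      have hmr : (m:ℝ) = (k:ℝ) * (⌈H ^ n⌉₊ : ℝ) := by push_cast [hm]; ring
      rw [hmr]
      have h0sq : (0:ℝ) ≤ Real.sqrt S := Real.sqrt_nonneg _
      nlinarith
    have hmem1 : H ^ n * ((k:ℝ) * Real.sqrt S) ∈ Set.Ioi (0:ℝ) := by
      simp only [Set.mem_Ioi]
      have hHn : (0:ℝ) < H ^ n := by positivity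
      nlinarith
    have hmem2 : (m:ℝ) * Real.sqrt S ∈ Set.Ioi (0:ℝ) := lt_of_lt_of_le hmem1 hman
    have hmono' := hmono hmem1 hmem2 hman
    have hdiff : M ((k:ℝ) * Real.sqrt S) - M ((m:ℝ) * Real.sqrt S) ≤
        n * H - n * Real.log ((k:ℝ) * Real.sqrt S) := by linarith
    have hlogk : Real.log (Real.sqrt S) ≤ Real.log ((k:ℝ) * Real.sqrt S) := by
      apply Real.log_le_log (by linarith)
      nlinarith
    have hlogsqrt : Real.log (Real.sqrt S) = Real.log (S:ℝ) / 2 := Real.log_sqrt (by linarith)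
    have hdiff2 : M ((k:ℝ) * Real.sqrt S) - M ((m:ℝ) * Real.sqrt S) ≤
        n * H - (2 * d : ℕ) * Real.log (S:ℝ) := by
      have : (n:ℝ) * Real.log (Real.sqrt S) ≤ n * Real.log ((k:ℝ) * Real.sqrt S) :=
        mul_le_mul_of_nonneg_left hlogk (by positivity)
      have hns : (n:ℝ) * (Real.log (S:ℝ) / 2) = ((2 * d : ℕ):ℝ) * Real.log (S:ℝ) := by
        push_cast [hn]; ring
      rw [hlogsqrt] at this
      linarith
    rw [hSr]
    calc Real.exp (M ((k:ℝ) * Real.sqrt S) - M ((m:ℝ) * Real.sqrt S))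
        ≤ Real.exp (n * H - (2 * d : ℕ) * Real.log (S:ℝ)) := Real.exp_le_exp.mpr hdiff2
      _ = Real.exp (n * H) * (1 / (S:ℝ) ^ (2 * d)) := by
          rw [Real.exp_sub, show Real.exp (((2*d:ℕ):ℝ) * Real.log (S:ℝ)) = (S:ℝ) ^ (2*d) from by
            rw [Real.exp_nat_mul, Real.exp_log (by linarith)], mul_one_div]
      _ ≤ Real.exp (n * H) * (2 ^ (2 * d) * ∏ i, (1 / ((γ i : ℝ) + 1) ^ 2)) := by
          apply mul_le_mul_of_nonneg_left _ (Real.exp_pos _).le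
          -- key combinatorial bound
          have hprod : (∏ i, ((γ i : ℝ) + 1)) ≤ (2 * (S:ℝ)) ^ d := by
            calc (∏ i, ((γ i : ℝ) + 1)) ≤ ∏ _i : Fin d, (2 * (S:ℝ)) := by
                  apply Finset.prod_le_prod (fun i _ => by positivity)
                  intro i _
                  have : γ i ≤ S := Finset.single_le_sum (f := fun i => γ i)
                    (fun i _ => Nat.zero_le _) (Finset.mem_univ i)
                  have : (γ i : ℝ) ≤ (S:ℝ) := by exact_mod_cast this
                  linarith
              _ = (2 * (S:ℝ)) ^ d := by simp
          have hprodpos : (0:ℝ) < ∏ i, ((γ i : ℝ) + 1) :=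
            Finset.prod_pos (fun i _ => by positivity)
          have hprodsq : (∏ i, ((γ i : ℝ) + 1) ^ 2) ≤ (2 * (S:ℝ)) ^ (2 * d) := by
            have := mul_le_mul hprod hprod hprodpos.le (by positivity)
            calc (∏ i, ((γ i : ℝ) + 1) ^ 2)
                = (∏ i, ((γ i : ℝ) + 1)) * (∏ i, ((γ i : ℝ) + 1)) := by
                  rw [← Finset.prod_mul_distrib]; congr 1; ext i; ring
              _ ≤ (2 * (S:ℝ)) ^ d * (2 * (S:ℝ)) ^ d := this
              _ = (2 * (S:ℝ)) ^ (2 * d) := by rw [← pow_add]; congr 1; ring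
          have hprodsqpos : (0:ℝ) < ∏ i, ((γ i : ℝ) + 1) ^ 2 :=
            Finset.prod_pos (fun i _ => by positivity)
          have hpi : (∏ i, (1 / ((γ i : ℝ) + 1) ^ 2)) = 1 / ∏ i, ((γ i : ℝ) + 1) ^ 2 := by
            rw [Finset.prod_div_distrib, Finset.prod_const_one]
          rw [hpi]
          rw [div_le_iff₀ (by positivity), mul_assoc, mul_comm (1 / _), ← mul_assoc]
          rw [mul_one_div, le_div_iff₀ hprodsqpos, one_mul]
          calc (∏ i, ((γ i : ℝ) + 1) ^ 2) ≤ (2 * (S:ℝ)) ^ (2 * d) := hprodsq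
            _ = 2 ^ (2 * d) * (S:ℝ) ^ (2 * d) := by rw [mul_pow]
      _ = Real.exp (n * H) * 2 ^ (2 * d) * ∏ i, (1 / ((γ i : ℝ) + 1) ^ 2) := by ring
end

section
/- Let (M_p)_p be log-convex (M_p² ≤ M_{p−1}M_{p+1} for p ≥ 1) with M_p^{1/p} → ∞, and M(t) its associated function. Then (M_p) satisfies (M2)' (∃A,H>0 with M_{p+1} ≤ A H^p M_p for all p) if and only if there exists H > 1 with M(t) + log t ≤ M(Ht) + H for all t > 0. -/
theorem stmt_15 (M : ℕ → ℝ) (hpos : ∀ p, 0 < M p)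
    (hgrow : Filter.Tendsto (fun p : ℕ => M p ^ (1 / (p : ℝ))) Filter.atTop Filter.atTop)
    (hM1 : ∀ p : ℕ, 1 ≤ p → M p ^ 2 ≤ M (p - 1) * M (p + 1))
    (Mf : ℝ → ℝ)
    (hMf : ∀ t > (0:ℝ), Mf t = sSup {x | ∃ p : ℕ, 1 ≤ p ∧ x = Real.log (t ^ p * M 0 / M p)}) :
    (∃ A > (0:ℝ), ∃ H > (0:ℝ), ∀ p : ℕ, M (p + 1) ≤ A * H ^ p * M p) ↔
      (∃ H > (1:ℝ), ∀ t > (0:ℝ), Mf t + Real.log t ≤ Mf (H * t) + H) := by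
  set S : ℝ → Set ℝ := fun t => {x | ∃ p : ℕ, 1 ≤ p ∧ x = Real.log (t ^ p * M 0 / M p)} with hS
  have hne : ∀ t : ℝ, (S t).Nonempty := fun t => ⟨Real.log (t ^ 1 * M 0 / M 1), 1, le_refl 1, rfl⟩
  have hP : ∀ (s : ℝ), 0 < s → ∀ q : ℕ, 0 < s ^ q * M 0 / M q := fun s hs q =>
    div_pos (mul_pos (pow_pos hs q) (hpos 0)) (hpos q)
  -- The set defining M(t) is bounded above, thanks to the growth hypothesis.
  have hBdd : ∀ t : ℝ, 0 < t → BddAbove (S t) := by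
    intro t ht
    obtain ⟨N, hN⟩ := Filter.eventually_atTop.1 (hgrow.eventually_ge_atTop (2 * t))
    set N' := max N 1 with hN'
    refine ⟨max (Real.log (M 0)) ((Finset.range (N' + 1)).sup'
      (Finset.nonempty_range_iff.2 (Nat.succ_ne_zero _))
      (fun p => Real.log (t ^ p * M 0 / M p))), ?_⟩
    rintro x ⟨p, hp1, rfl⟩
    rcases le_or_gt p N' with h | h
    · exact le_max_of_le_right (Finset.le_sup' (fun p => Real.log (t ^ p * M 0 / M p)) (Finset.mem_range.2 (Nat.lt_succ_of_le h)))
    · have hpN : N ≤ p := le_trans (le_max_left _ _) h.le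
      have h2t : 2 * t ≤ M p ^ (1 / (p : ℝ)) := hN p hpN
      have hp0 : (p : ℝ) ≠ 0 := Nat.cast_ne_zero.2 (by omega)
      have hMp : (2 * t) ^ p ≤ M p := by
        calc (2 * t) ^ p ≤ (M p ^ (1 / (p : ℝ))) ^ p :=
              pow_le_pow_left₀ (by positivity) h2t p
          _ = M p := by
            rw [← Real.rpow_natCast (M p ^ (1 / (p : ℝ))) p, ← Real.rpow_mul (hpos p).le,
              one_div_mul_cancel hp0, Real.rpow_one]
    -- hence t^p * M 0 / M p ≤ M 0
      refine le_max_of_le_left (Real.log_le_log (hP t ht p) ?_)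
      have h2 : t ^ p * M 0 / M p ≤ t ^ p * M 0 / (2 * t) ^ p :=
        div_le_div_of_nonneg_left (mul_pos (pow_pos ht p) (hpos 0)).le (by positivity) hMp
      have h3 : t ^ p * M 0 / (2 * t) ^ p = M 0 / 2 ^ p := by
        rw [mul_pow]; field_simp
      have h4 : M 0 / 2 ^ p ≤ M 0 :=
        div_le_self (hpos 0).le (one_le_pow₀ (by norm_num))
      linarith [h2, h3.le, h3.ge]
  -- ratios are monotone
  have hr : Monotone (fun q => M (q + 1) / M q) := by
    apply monotone_nat_of_le_succ
    intro q
    have h := hM1 (q + 1) (by omega)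
    simp only [Nat.add_sub_cancel] at h
    rw [div_le_div_iff₀ (hpos q) (hpos (q + 1))]
    nlinarith [h, (hpos (q + 1)).le]
  -- key: at t = M(p+1)/M p, the sup is attained at index p+1
  have key : ∀ p q : ℕ, (M (p+1) / M p) ^ q / M q ≤ (M (p+1) / M p) ^ (p+1) / M (p+1) := by
    intro p
    set t := M (p+1) / M p with htdef
    have ht : 0 < t := div_pos (hpos _) (hpos _)
    have step_up : ∀ j, j ≤ p → t ^ j / M j ≤ t ^ (j+1) / M (j+1) := by
      intro j hj
      rw [div_le_div_iff₀ (hpos j) (hpos (j+1))]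
      have h1 : M (j+1) / M j ≤ t := hr hj
      have h2 : M (j+1) ≤ t * M j := by
        rw [div_le_iff₀ (hpos j)] at h1; linarith
      calc t ^ j * M (j+1) ≤ t ^ j * (t * M j) :=
            mul_le_mul_of_nonneg_left h2 (by positivity)
        _ = t ^ (j+1) * M j := by ring
    have step_down : ∀ j, p ≤ j → t ^ (j+1) / M (j+1) ≤ t ^ j / M j := by
      intro j hj
      rw [div_le_div_iff₀ (hpos (j+1)) (hpos j)]
      have h1 : t ≤ M (j+1) / M j := hr hj
      have h2 : t * M j ≤ M (j+1) := by
        rw [le_div_iff₀ (hpos j)] at h1; linarith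
      calc t ^ (j+1) * M j = t ^ j * (t * M j) := by ring
        _ ≤ t ^ j * M (j+1) := mul_le_mul_of_nonneg_left h2 (by positivity)
    have up : ∀ k, t ^ (p+1-k) / M (p+1-k) ≤ t ^ (p+1) / M (p+1) := by
      intro k
      induction k with
      | zero => simp
      | succ k ih =>
        rcases le_or_gt (k+1) (p+1) with h | h
        · have hj : p + 1 - (k+1) ≤ p := by omega
          have hst := step_up (p+1-(k+1)) hj
          have he : p + 1 - (k+1) + 1 = p + 1 - k := by omega
          rw [he] at hst
          exact hst.trans ih
        · have h0 : p + 1 - (k+1) = p + 1 - k := by omega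
          rw [h0]; exact ih
    have down : ∀ k, t ^ (p+1+k) / M (p+1+k) ≤ t ^ (p+1) / M (p+1) := by
      intro k
      induction k with
      | zero => simp
      | succ k ih =>
        have hst := step_down (p+1+k) (by omega)
        have he : p+1+(k+1) = (p+1+k)+1 := by omega
        rw [he]
        exact hst.trans ih
    intro q
    rcases le_or_gt q (p+1) with h | h
    · have h' := up (p+1-q)
      rw [show p+1-(p+1-q) = q from by omega] at h'
      exact h'
    · have h' := down (q-(p+1))
      rw [show p+1+(q-(p+1)) = q from by omega] at h'
      exact h'
  -- value of Mf at the ratio points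
  have hMfval : ∀ p : ℕ,
      Mf (M (p+1) / M p) = Real.log ((M (p+1) / M p) ^ (p+1) * M 0 / M (p+1)) := by
    intro p
    set t := M (p+1) / M p with htdef
    have ht : 0 < t := div_pos (hpos _) (hpos _)
    rw [hMf t ht]
    apply le_antisymm
    · apply csSup_le (hne t)
      rintro x ⟨q, hq1, rfl⟩
      apply Real.log_le_log (hP t ht q)
      have h := key p q
      calc t ^ q * M 0 / M q = (t ^ q / M q) * M 0 := by ring
        _ ≤ (t ^ (p+1) / M (p+1)) * M 0 :=
            mul_le_mul_of_nonneg_right h (hpos 0).le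
        _ = t ^ (p+1) * M 0 / M (p+1) := by ring
    · exact le_csSup (hBdd t ht) ⟨p+1, by omega, rfl⟩
  constructor
  · -- forward direction
    rintro ⟨A, hA, H, hH, hA2⟩
    set H' := max (max H 2) (Real.log A) with hH'def
    have hH'2 : (2:ℝ) ≤ H' := le_trans (le_max_right H 2) (le_max_left _ _)
    have hH'1 : (1:ℝ) < H' := by linarith
    have hH'H : H ≤ H' := le_trans (le_max_left H 2) (le_max_left _ _)
    have hAexp : A ≤ Real.exp H' :=
      (Real.log_le_iff_le_exp hA).1 (le_max_right _ _)
    have hH'0 : (0:ℝ) < H' := by linarith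
    refine ⟨H', hH'1, ?_⟩
    intro t ht
    have ht' : 0 < H' * t := by positivity
    rw [hMf t ht, hMf _ ht']
    have main : ∀ x ∈ S t, x ≤ sSup (S (H' * t)) + H' - Real.log t := by
      rintro x ⟨q, hq1, rfl⟩
      have e1 : Real.log (t ^ q * M 0 / M q) + Real.log t
          = Real.log (t ^ (q+1) * M 0 / M q) := by
        rw [← Real.log_mul (hP t ht q).ne' ht.ne']
        congr 1
        ring
      have e2 : t ^ (q+1) * M 0 / M q
          ≤ Real.exp H' * ((H' * t) ^ (q+1) * M 0 / M (q+1)) := by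
        have h1 : t ^ (q+1) * M 0 / M q ≤ (A * H ^ q) * (t ^ (q+1) * M 0) / M (q+1) := by
          rw [div_le_div_iff₀ (hpos q) (hpos (q+1))]
          nlinarith [mul_le_mul_of_nonneg_left (hA2 q)
            (mul_pos (pow_pos ht (q+1)) (hpos 0)).le]
        have h2 : A * H ^ q ≤ Real.exp H' * H' ^ (q+1) := by
          have hHq : H ^ q ≤ H' ^ q := pow_le_pow_left₀ hH.le hH'H q
          have hq2 : H' ^ q ≤ H' ^ (q+1) :=
            pow_le_pow_right₀ (by linarith) (by omega)
          have := mul_le_mul hAexp (hHq.trans hq2) (by positivity) (Real.exp_pos H').le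
          linarith
        calc t ^ (q+1) * M 0 / M q ≤ (A * H ^ q) * (t ^ (q+1) * M 0) / M (q+1) := h1
          _ ≤ (Real.exp H' * H' ^ (q+1)) * (t ^ (q+1) * M 0) / M (q+1) := by
              apply div_le_div_of_nonneg_right ?_ (hpos (q+1)).le
              exact mul_le_mul_of_nonneg_right h2 (mul_pos (pow_pos ht (q+1)) (hpos 0)).le
          _ = Real.exp H' * ((H' * t) ^ (q+1) * M 0 / M (q+1)) := by
              rw [mul_pow]; ring
      have e3 : Real.log (t ^ (q+1) * M 0 / M q)
          ≤ H' + Real.log ((H' * t) ^ (q+1) * M 0 / M (q+1)) := by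
        calc Real.log (t ^ (q+1) * M 0 / M q)
            ≤ Real.log (Real.exp H' * ((H' * t) ^ (q+1) * M 0 / M (q+1))) :=
              Real.log_le_log (div_pos (mul_pos (pow_pos ht (q+1)) (hpos 0)) (hpos q)) e2
          _ = H' + Real.log ((H' * t) ^ (q+1) * M 0 / M (q+1)) := by
              rw [Real.log_mul (Real.exp_ne_zero H') (hP _ ht' (q+1)).ne', Real.log_exp]
      have e4 : Real.log ((H' * t) ^ (q+1) * M 0 / M (q+1)) ≤ sSup (S (H' * t)) :=
        le_csSup (hBdd _ ht') ⟨q+1, by omega, rfl⟩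
      linarith
    have := csSup_le (hne t) main
    linarith
  · -- reverse direction
    rintro ⟨H, hH1, hHle⟩
    have hH0 : (0:ℝ) < H := lt_trans one_pos hH1
    set A := max (Real.exp H * H) (M 1 / M 0) with hAdef
    have hA0 : (0:ℝ) < A := lt_of_lt_of_le (by positivity) (le_max_left _ _)
    refine ⟨A, hA0, H, hH0, ?_⟩
    intro p
    rcases Nat.eq_zero_or_pos p with rfl | hp1
    · have h1 : M 1 / M 0 ≤ A := le_max_right _ _
      rw [div_le_iff₀ (hpos 0)] at h1
      calc M 1 ≤ A * M 0 := h1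
        _ = A * H ^ 0 * M 0 := by ring
    · set r := M (p+1) / M p with hrdef
      have hrpos : 0 < r := div_pos (hpos _) (hpos _)
      set t0 := r / H with ht0def
      have ht0 : 0 < t0 := by positivity
      have h := hHle t0 ht0
      have hHt : H * t0 = r := by rw [ht0def]; field_simp
      rw [hHt, hMfval p] at h
      have hlow : Real.log (t0 ^ p * M 0 / M p) ≤ Mf t0 := by
        rw [hMf t0 ht0]
        exact le_csSup (hBdd _ ht0) ⟨p, hp1, rfl⟩
      have e1 : Real.log (t0 ^ (p+1) * M 0 / M p)
          ≤ H + Real.log (r ^ (p+1) * M 0 / M (p+1)) := by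
        have el : Real.log (t0 ^ p * M 0 / M p) + Real.log t0
            = Real.log (t0 ^ (p+1) * M 0 / M p) := by
          rw [← Real.log_mul (hP t0 ht0 p).ne' ht0.ne']
          congr 1
          ring
        linarith
      have e2 : t0 ^ (p+1) * M 0 / M p
          ≤ Real.exp H * (r ^ (p+1) * M 0 / M (p+1)) := by
        have := Real.exp_le_exp.2 e1
        rwa [Real.exp_log (div_pos (mul_pos (pow_pos ht0 (p+1)) (hpos 0)) (hpos p)),
          Real.exp_add, Real.exp_log (hP r hrpos (p+1))] at this
      -- clear denominators
      have e3 : r ^ (p+1) * M 0 / (H ^ (p+1) * M p)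
          ≤ (Real.exp H * (r ^ (p+1) * M 0)) / M (p+1) := by
        have l1 : t0 ^ (p+1) * M 0 / M p = r ^ (p+1) * M 0 / (H ^ (p+1) * M p) := by
          rw [ht0def, div_pow]
          field_simp
        have l2 : Real.exp H * (r ^ (p+1) * M 0 / M (p+1))
            = (Real.exp H * (r ^ (p+1) * M 0)) / M (p+1) := by ring
        rw [l1, l2] at e2
        exact e2
      have e4 := (div_le_div_iff₀ (mul_pos (pow_pos hH0 (p+1)) (hpos p)) (hpos (p+1))).1 e3
      -- e4 : r^(p+1) * M 0 * M (p+1) ≤ exp H * (r^(p+1) * M 0) * (H^(p+1) * M p)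
      have hu : (0:ℝ) < r ^ (p+1) * M 0 := mul_pos (pow_pos hrpos (p+1)) (hpos 0)
      have e5 : M (p+1) ≤ Real.exp H * H ^ (p+1) * M p := by
        have e4' : (r ^ (p+1) * M 0) * M (p+1)
            ≤ (r ^ (p+1) * M 0) * (Real.exp H * H ^ (p+1) * M p) := by
          nlinarith [e4]
        exact le_of_mul_le_mul_left e4' hu
      have hAe : Real.exp H * H ≤ A := le_max_left _ _
      calc M (p+1) ≤ Real.exp H * H ^ (p+1) * M p := e5
        _ = (Real.exp H * H) * H ^ p * M p := by ring
        _ ≤ A * H ^ p * M p := by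
            have h0 : (0:ℝ) ≤ H ^ p * M p := (mul_pos (pow_pos hH0 p) (hpos p)).le
            nlinarith [hAe]
end

section
/- For any weight function ω (continuous, increasing, ω(2t) ≤ L(ω(t)+1), ω(t) = o(t), ω(t) ≥ a + b log(1+t) with b > 0, and t ↦ ω(e^t) convex), there exists a subadditive weight function σ with the same properties such that ω(t) = o(σ(t)) as t → ∞. -/
open Real Filter

namespace Stmt16

structure Good (T : ℕ → ℝ) : Prop where
  nonneg : 0 ≤ T 0
  one_le : ∀ n, 1 ≤ T (n+1) - T n
  gmono : ∀ n, T (n+1) - T n ≤ T (n+2) - T (n+1)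

noncomputable def g (T : ℕ → ℝ) (n : ℕ) : ℝ := T (n+1) - T n

noncomputable def A (T : ℕ → ℝ) (n : ℕ) (s : ℝ) : ℝ := (n:ℝ) - 1 + (s - T n) / g T n

variable {T : ℕ → ℝ}

lemma Good.gpos (hT : Good T) (n : ℕ) : 0 < g T n :=
  lt_of_lt_of_le one_pos (hT.one_le n)

lemma Good.g_one_le (hT : Good T) (n : ℕ) : 1 ≤ g T n := hT.one_le n

lemma Good.g_mono' (hT : Good T) (n : ℕ) : g T n ≤ g T (n+1) := hT.gmono n

lemma Good.T_mono (hT : Good T) : StrictMono T :=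
  strictMono_nat_of_lt_succ (fun n => by have := hT.one_le n; linarith)

lemma Good.le_T (hT : Good T) (n : ℕ) : (n : ℝ) ≤ T n := by
  induction n with
  | zero => simpa using hT.nonneg
  | succ k ih => have := hT.one_le k; push_cast; linarith

lemma Good.exists_le (hT : Good T) (s : ℝ) : ∃ n, s ≤ T (n + 1) := by
  obtain ⟨n, hn⟩ := exists_nat_ge s
  refine ⟨n, hn.trans ?_⟩
  exact (hT.le_T n).trans (hT.T_mono (Nat.lt_succ_self n)).le

noncomputable def idx (hT : Good T) (s : ℝ) : ℕ :=
  @Nat.find _ (Classical.decPred _) (hT.exists_le s)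

lemma idx_spec (hT : Good T) (s : ℝ) : s ≤ T (idx hT s + 1) :=
  @Nat.find_spec _ (Classical.decPred _) (hT.exists_le s)

lemma idx_min (hT : Good T) {s : ℝ} {k : ℕ} (h : k < idx hT s) : T (k + 1) < s := by
  have := @Nat.find_min _ (Classical.decPred _) (hT.exists_le s) _ h
  exact lt_of_not_ge this

lemma A_mono (hT : Good T) (n : ℕ) : Monotone (A T n) := by
  intro x y hxy
  unfold A
  have h := hT.gpos n
  gcongr

lemma A_diff (hT : Good T) (k : ℕ) (s : ℝ) :
    A T (k+1) s - A T k s = (s - T (k+1)) * (1 / g T (k+1) - 1 / g T k) := by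
  have h1 := (hT.gpos k).ne'
  have h2 := (hT.gpos (k+1)).ne'
  unfold A g at *
  push_cast
  field_simp
  ring


lemma A_step_up (hT : Good T) {s : ℝ} {k : ℕ} (h : s ≤ T (k+1)) :
    A T k s ≤ A T (k+1) s := by
  have hd := A_diff hT k s
  have h1 : 1 / g T (k+1) ≤ 1 / g T k :=
    one_div_le_one_div_of_le (hT.gpos k) (hT.g_mono' k)
  have hx : (0:ℝ) ≤ -(s - T (k+1)) := by linarith
  have hy : (0:ℝ) ≤ -(1 / g T (k+1) - 1 / g T k) := by linarith
  nlinarith [mul_nonneg hx hy]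

lemma A_step_down (hT : Good T) {s : ℝ} {k : ℕ} (h : T (k+1) ≤ s) :
    A T (k+1) s ≤ A T k s := by
  have hd := A_diff hT k s
  have h1 : 1 / g T (k+1) ≤ 1 / g T k :=
    one_div_le_one_div_of_le (hT.gpos k) (hT.g_mono' k)
  have hx : (0:ℝ) ≤ s - T (k+1) := by linarith
  have hy : (0:ℝ) ≤ -(1 / g T (k+1) - 1 / g T k) := by linarith
  nlinarith [mul_nonneg hx hy]

noncomputable def rho (hT : Good T) (s : ℝ) : ℝ := A T (idx hT s) s

noncomputable def FF (hT : Good T) (s : ℝ) : ℝ := s - rho hT s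

lemma rho_le_A (hT : Good T) (s : ℝ) (n : ℕ) : rho hT s ≤ A T n s := by
  rcases le_or_gt (idx hT s) n with hle | hlt
  · -- go up from idx to n
    obtain ⟨j, rfl⟩ := Nat.exists_eq_add_of_le hle
    induction j with
    | zero => simp [rho]
    | succ i ih =>
      refine le_trans (ih (Nat.le_add_right _ _)) ?_
      refine A_step_up hT ?_
      refine le_trans (idx_spec hT s) (hT.T_mono.monotone ?_)
      omega
  · -- n < idx : go down from some k to n ; show ∀ k ≤ idx, n ≤ k → A k s ≤ A n s
    have key : ∀ k, k ≤ idx hT s → n ≤ k → A T k s ≤ A T n s := by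
      intro k hk
      induction k with
      | zero => intro h; interval_cases n; exact le_refl _
      | succ i ih =>
        intro hn
        rcases Nat.lt_or_ge n (i+1) with h' | h'
        · have hi : i < idx hT s := lt_of_lt_of_le (Nat.lt_succ_self i) hk
          have : T (i+1) ≤ s := (idx_min hT hi).le
          exact le_trans (A_step_down hT this) (ih (le_of_lt hi) (Nat.lt_succ_iff.mp h'))
        · have : n = i + 1 := le_antisymm hn h'
          subst this; exact le_refl _
    exact key (idx hT s) (le_refl _) (le_of_lt hlt)

lemma rho_mono (hT : Good T) : Monotone (rho hT) := by
  intro x y hxy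
  exact le_trans (rho_le_A hT x (idx hT y)) (A_mono hT _ hxy)

lemma FF_mono (hT : Good T) : Monotone (FF hT) := by
  intro x y hxy
  have h1 : rho hT y ≤ A T (idx hT x) y := rho_le_A hT y _
  have h2 : A T (idx hT x) y - A T (idx hT x) x = (y - x) / g T (idx hT x) := by
    unfold A; ring
  have h3 : (y - x) / g T (idx hT x) ≤ y - x := by
    rw [div_le_iff₀ (hT.gpos _)]
    nlinarith [hT.g_one_le (idx hT x), sub_nonneg.mpr hxy]
  have : rho hT x = A T (idx hT x) x := rfl
  unfold FF
  linarith

lemma A_affine (hT : Good T) (n : ℕ) {a b : ℝ} (hab : a + b = 1) (x y : ℝ) :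
    A T n (a * x + b * y) = a * A T n x + b * A T n y := by
  have h1 := (hT.gpos n).ne'
  have hb : b = 1 - a := by linarith
  subst hb
  unfold A
  field_simp
  ring

lemma FF_convex (hT : Good T) : ConvexOn ℝ Set.univ (FF hT) := by
  refine ⟨convex_univ, ?_⟩
  intro x _ y _ a b ha hb hab
  set z := a • x + b • y with hz
  have hz' : z = a * x + b * y := by simp [hz, smul_eq_mul]
  have h1 : FF hT z = z - A T (idx hT z) z := rfl
  have h2 : A T (idx hT z) z = a * A T (idx hT z) x + b * A T (idx hT z) y := by
    rw [hz']; exact A_affine hT _ hab x y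
  have h3 : rho hT x ≤ A T (idx hT z) x := rho_le_A hT x _
  have h4 : rho hT y ≤ A T (idx hT z) y := rho_le_A hT y _
  have h5 : rho hT z = A T (idx hT z) z := rfl
  show z - rho hT z ≤ a * (x - rho hT x) + b * (y - rho hT y)
  nlinarith [mul_le_mul_of_nonneg_left h3 ha, mul_le_mul_of_nonneg_left h4 hb]

lemma rho_le_idx (hT : Good T) (s : ℝ) : rho hT s ≤ (idx hT s : ℝ) := by
  have h := idx_spec hT s
  have hg := hT.gpos (idx hT s)
  have hg' : g T (idx hT s) ≠ 0 := hg.ne'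
  have : A T (idx hT s) s = (idx hT s : ℝ) + (s - T (idx hT s + 1)) / g T (idx hT s) := by
    unfold A g at *; field_simp; ring
  have hnp : (s - T (idx hT s + 1)) / g T (idx hT s) ≤ 0 :=
    div_nonpos_of_nonpos_of_nonneg (by linarith) hg.le
  unfold rho; rw [this]; linarith

lemma le_idx_of_T_lt (hT : Good T) {n : ℕ} {s : ℝ} (h : T (n+1) < s) : n + 1 ≤ idx hT s := by
  by_contra hc
  push_neg at hc
  have : T (idx hT s + 1) ≤ T (n + 1) := hT.T_mono.monotone (by omega)
  have := idx_spec hT s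
  linarith

lemma rho_ge (hT : Good T) {n : ℕ} {s : ℝ} (h : T (n+1) < s) : (n : ℝ) ≤ rho hT s := by
  have hidx := le_idx_of_T_lt hT h
  have hpos : 0 < idx hT s := by omega
  have hTlt : T (idx hT s) < s := by
    have : idx hT s - 1 < idx hT s := by omega
    have := idx_min hT (show idx hT s - 1 < idx hT s by omega)
    have heq : idx hT s - 1 + 1 = idx hT s := by omega
    rwa [heq] at this
  have hg := hT.gpos (idx hT s)
  have h2 : (0:ℝ) ≤ (s - T (idx hT s)) / g T (idx hT s) :=
    div_nonneg (by linarith) hg.le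
  have h3 : (n : ℝ) ≤ (idx hT s : ℝ) - 1 := by
    have : (n:ℝ) + 1 ≤ (idx hT s : ℝ) := by exact_mod_cast hidx
    linarith
  unfold rho A
  linarith

lemma FF_continuous (hT : Good T) : Continuous (FF hT) := by
  rw [← continuousOn_univ]
  exact (FF_convex hT).continuousOn isOpen_univ


lemma idx_pos_T_lt (hT : Good T) {s : ℝ} (h : 1 ≤ idx hT s) : T (idx hT s) < s := by
  have h2 := idx_min hT (show idx hT s - 1 < idx hT s by omega)
  have he : idx hT s - 1 + 1 = idx hT s := by omega
  rwa [he] at h2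

lemma exists_good (raw : ℕ → ℝ) : ∃ T : ℕ → ℝ, Good T ∧ ∀ n, raw n ≤ T n := by
  let P : ℕ → ℝ × ℝ := fun n => Nat.rec
    (max 0 (raw 0), max (max 0 (raw 0) + 1) (raw 1))
    (fun k p => (p.2, max (raw (k+2)) (2 * p.2 - p.1))) n
  have h1 : ∀ n, (P (n+1)).1 = (P n).2 := fun n => rfl
  have hstep : ∀ n, (P (n+1)).2 = max (raw (n+2)) (2 * (P n).2 - (P n).1) := fun n => rfl
  have hgap : ∀ n, 1 ≤ (P n).2 - (P n).1 ∧ (P n).2 - (P n).1 ≤ (P (n+1)).2 - (P (n+1)).1 := by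
    have key : ∀ n, 1 ≤ (P n).2 - (P n).1 := by
      intro n
      induction n with
      | zero =>
        have e1 : (P 0).1 = max 0 (raw 0) := rfl
        have e2 : (P 0).2 = max (max 0 (raw 0) + 1) (raw 1) := rfl
        have h3 : max 0 (raw 0) + 1 ≤ max (max 0 (raw 0) + 1) (raw 1) := le_max_left _ _
        rw [e1, e2]; linarith
      | succ k ih =>
        rw [hstep k, h1 k]
        have : 2 * (P k).2 - (P k).1 ≤ max (raw (k+2)) (2 * (P k).2 - (P k).1) := le_max_right _ _
        linarith
    intro n
    refine ⟨key n, ?_⟩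
    rw [hstep n, h1 n]
    have : 2 * (P n).2 - (P n).1 ≤ max (raw (n+2)) (2 * (P n).2 - (P n).1) := le_max_right _ _
    linarith
  refine ⟨fun n => (P n).1, ⟨?_, ?_, ?_⟩, ?_⟩
  · exact le_max_left _ _
  · intro n; rw [h1 n]; exact (hgap n).1
  · intro n; rw [h1 n, h1 (n+1)]; exact (hgap n).2
  · intro n
    match n with
    | 0 => exact le_max_right _ _
    | 1 =>
      show raw 1 ≤ (P 1).1
      have e : (P 1).1 = max (max 0 (raw 0) + 1) (raw 1) := rfl
      rw [e]; exact le_max_right _ _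
    | (k+2) =>
      show raw (k+2) ≤ (P (k+2)).1
      have e : (P (k+2)).1 = max (raw (k+2)) (2 * (P k).2 - (P k).1) := rfl
      rw [e]; exact le_max_left _ _

end Stmt16
open Real Filter Stmt16 in
theorem stmt_16 (ω : ℝ → ℝ)
    (hcont : ContinuousOn ω (Set.Ici 0)) (hmono : MonotoneOn ω (Set.Ici 0))
    (hnonneg : ∀ t ≥ (0:ℝ), 0 ≤ ω t)
    (hα : ∃ L ≥ (1:ℝ), ∀ t ≥ (0:ℝ), ω (2 * t) ≤ L * (ω t + 1))
    (hβ : Filter.Tendsto (fun t => ω t / t) Filter.atTop (nhds 0))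
    (hγ : ∃ a : ℝ, ∃ b > (0:ℝ), ∀ t ≥ (0:ℝ), a + b * Real.log (1 + t) ≤ ω t)
    (hδ : ConvexOn ℝ Set.univ (fun s : ℝ => ω (Real.exp s))) :
    ∃ σ : ℝ → ℝ,
      ContinuousOn σ (Set.Ici 0) ∧ MonotoneOn σ (Set.Ici 0) ∧
      (∀ t ≥ (0:ℝ), 0 ≤ σ t) ∧
      (∃ L ≥ (1:ℝ), ∀ t ≥ (0:ℝ), σ (2 * t) ≤ L * (σ t + 1)) ∧
      Filter.Tendsto (fun t => σ t / t) Filter.atTop (nhds 0) ∧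
      (∃ a : ℝ, ∃ b > (0:ℝ), ∀ t ≥ (0:ℝ), a + b * Real.log (1 + t) ≤ σ t) ∧
      ConvexOn ℝ Set.univ (fun s : ℝ => σ (Real.exp s)) ∧
      (∀ t₁ ≥ (0:ℝ), ∀ t₂ ≥ (0:ℝ), σ (t₁ + t₂) ≤ σ t₁ + σ t₂) ∧
      Filter.Tendsto (fun t => ω t / σ t) Filter.atTop (nhds 0) := by
  classical
  obtain ⟨a, b, hb, hγ'⟩ := hγ
  set u : ℝ → ℝ := fun s => (ω (Real.exp s) + 1) * Real.exp (-s) with hu_def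
  have hβe : Filter.Tendsto (fun s => ω (Real.exp s) / Real.exp s) Filter.atTop (nhds 0) :=
    hβ.comp Real.tendsto_exp_atTop
  have hu : Filter.Tendsto u Filter.atTop (nhds 0) := by
    have heq : u = fun s => ω (Real.exp s) / Real.exp s + Real.exp (-s) := by
      funext s
      have h := (Real.exp_pos s).ne'
      rw [hu_def]
      simp only [Real.exp_neg, div_eq_mul_inv]
      ring
    rw [heq]
    simpa using hβe.add Real.tendsto_exp_neg_atTop_nhds_zero
  have hrawex : ∀ n : ℕ, ∃ S : ℝ, ∀ s ≥ S, u s ≤ Real.exp (-(2 * (n:ℝ))) := by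
    intro n
    have h := hu.eventually (gt_mem_nhds (Real.exp_pos (-(2 * (n:ℝ)))))
    obtain ⟨S, hS⟩ := Filter.eventually_atTop.mp h
    exact ⟨S, fun s hs => (hS s hs).le⟩
  choose raw hraw using hrawex
  obtain ⟨T, hT, hTraw⟩ := exists_good raw
  set c : ℝ := Real.exp (T 1) with hc_def
  set σ : ℝ → ℝ := fun t => Real.exp (FF hT (Real.log (max t c))) with hσ_def
  have hc_pos : 0 < c := Real.exp_pos _
  have hT1 : (1:ℝ) ≤ T 1 := by
    have h1 := hT.one_le 0
    have h2 := hT.nonneg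
    linarith
  have hmaxpos : ∀ t : ℝ, 0 < max t c := fun t => lt_of_lt_of_le hc_pos (le_max_right _ _)
  have hσ_val : ∀ t : ℝ, σ t = Real.exp (FF hT (Real.log (max t c))) := fun t => rfl
  have hσ_pos : ∀ t : ℝ, 0 < σ t := fun t => Real.exp_pos _
  have hexpmono : Monotone Real.exp := fun x y h => Real.exp_le_exp.mpr h
  have hσexp : ∀ s : ℝ, σ (Real.exp s) = Real.exp (FF hT (max s (T 1))) := by
    intro s
    rw [hσ_val]
    have h1 : max (Real.exp s) c = Real.exp (max s (T 1)) := by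
      rw [hc_def, hexpmono.map_max]
    rw [h1, Real.log_exp]
  have hFF_val : ∀ s : ℝ, FF hT s = s - rho hT s := fun s => rfl
  have hform : ∀ z : ℝ, σ z = max z c * Real.exp (-(rho hT (Real.log (max z c)))) := by
    intro z
    rw [hσ_val, hFF_val, sub_eq_add_neg, Real.exp_add, Real.exp_log (hmaxpos z)]
  -- the key upper bound on ω
  have hub : ∀ (n : ℕ) (s : ℝ), T (n+1) < s →
      ω (Real.exp s) ≤ Real.exp (-((n:ℝ)+1)) * σ (Real.exp s) := by
    intro n s hs
    have hm : n + 1 ≤ idx hT s := le_idx_of_T_lt hT hs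
    have hm1 : 1 ≤ idx hT s := by omega
    have hTm : T (idx hT s) < s := idx_pos_T_lt hT hm1
    have hrawm : raw (idx hT s) ≤ s := le_trans (hTraw _) hTm.le
    have hum : u s ≤ Real.exp (-(2 * ((idx hT s):ℝ))) := hraw _ s hrawm
    have hρm : rho hT s ≤ ((idx hT s):ℝ) := rho_le_idx hT s
    have hsT1 : T 1 ≤ s := le_trans (hT.T_mono.monotone (by omega : 1 ≤ n+1)) hs.le
    have hσs : σ (Real.exp s) = Real.exp (FF hT s) := by
      rw [hσexp s, max_eq_left hsT1]
    have h1 : ω (Real.exp s) ≤ u s * Real.exp s := by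
      rw [hu_def]
      have h2 := (Real.exp_pos s).ne'
      have : (ω (Real.exp s) + 1) * Real.exp (-s) * Real.exp s = ω (Real.exp s) + 1 := by
        rw [Real.exp_neg]; field_simp
      rw [this]; linarith
    have hcast : ((n:ℝ)+1) ≤ ((idx hT s):ℝ) := by exact_mod_cast hm
    calc ω (Real.exp s) ≤ u s * Real.exp s := h1
      _ ≤ Real.exp (-(2 * ((idx hT s):ℝ))) * Real.exp s :=
          mul_le_mul_of_nonneg_right hum (Real.exp_pos s).le
      _ = Real.exp (-(2 * ((idx hT s):ℝ)) + rho hT s) * Real.exp (s - rho hT s) := by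
          rw [← Real.exp_add, ← Real.exp_add]; ring_nf
      _ ≤ Real.exp (-((n:ℝ)+1)) * σ (Real.exp s) := by
          rw [hσs, hFF_val]
          exact mul_le_mul_of_nonneg_right (Real.exp_le_exp.mpr (by linarith))
            (Real.exp_pos _).le
  refine ⟨σ, ?_, ?_, ?_, ?_, ?_, ?_, ?_, ?_, ?_⟩
  · -- continuity
    have hcontσ : Continuous σ := by
      apply Real.continuous_exp.comp
      apply (FF_continuous hT).comp
      exact Continuous.log (continuous_id.max continuous_const) (fun x => (hmaxpos x).ne')
    exact hcontσ.continuousOn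
  · -- monotone
    intro x _ y _ hxy
    rw [hσ_val, hσ_val]
    exact Real.exp_le_exp.mpr (FF_mono hT
      (Real.log_le_log (hmaxpos x) (max_le_max hxy le_rfl)))
  · exact fun t _ => (hσ_pos t).le
  · -- doubling
    refine ⟨2, one_le_two, ?_⟩
    intro t ht
    have hM12 : max t c ≤ max (2*t) c := max_le_max (by linarith) le_rfl
    have hM2 : max (2*t) c ≤ 2 * max t c := by
      apply max_le
      · have := le_max_left t c; linarith
      · have := le_max_right t c; linarith
    have h1 : Real.log (max (2*t) c) ≤ Real.log (2 * max t c) :=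
      Real.log_le_log (hmaxpos _) hM2
    have h3 : Real.log (2 * max t c) = Real.log 2 + Real.log (max t c) :=
      Real.log_mul (by norm_num) (hmaxpos t).ne'
    have h2 : rho hT (Real.log (max t c)) ≤ rho hT (Real.log (max (2*t) c)) :=
      rho_mono hT (Real.log_le_log (hmaxpos t) hM12)
    have hle : σ (2*t) ≤ 2 * σ t := by
      rw [hσ_val (2*t), hσ_val t, hFF_val, hFF_val]
      have : Real.log (max (2*t) c) - rho hT (Real.log (max (2*t) c)) ≤
          Real.log 2 + (Real.log (max t c) - rho hT (Real.log (max t c))) := by linarith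
      calc Real.exp (Real.log (max (2*t) c) - rho hT (Real.log (max (2*t) c)))
          ≤ Real.exp (Real.log 2 + (Real.log (max t c) - rho hT (Real.log (max t c)))) :=
            Real.exp_le_exp.mpr this
        _ = 2 * Real.exp (Real.log (max t c) - rho hT (Real.log (max t c))) := by
            rw [Real.exp_add, Real.exp_log (by norm_num : (0:ℝ) < 2)]
    have := hσ_pos t
    linarith
  · -- σ t / t → 0
    rw [Metric.tendsto_atTop]
    intro ε hε
    obtain ⟨n, hn⟩ := exists_nat_gt (-Real.log ε)
    refine ⟨Real.exp (T (n+1) + 1), ?_⟩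
    intro t htN
    have htpos : 0 < t := lt_of_lt_of_le (Real.exp_pos _) htN
    have hlog : T (n+1) + 1 ≤ Real.log t := (Real.le_log_iff_exp_le htpos).mpr htN
    have hTlt : T (n+1) < Real.log t := by linarith
    have hρ : (n:ℝ) ≤ rho hT (Real.log t) := rho_ge hT hTlt
    have hct : c ≤ t := by
      rw [hc_def]
      refine le_trans (hexpmono ?_) htN
      have := hT.T_mono.monotone (show 1 ≤ n+1 by omega)
      linarith
    have hmax : max t c = t := max_eq_left hct
    have hσt : σ t = t * Real.exp (-(rho hT (Real.log t))) := by
      rw [hform t, hmax]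
    have hdiv : σ t / t = Real.exp (-(rho hT (Real.log t))) := by
      rw [hσt, mul_comm, mul_div_assoc, div_self htpos.ne', mul_one]
    rw [Real.dist_eq, sub_zero, abs_of_nonneg (by positivity), hdiv]
    calc Real.exp (-(rho hT (Real.log t))) ≤ Real.exp (-(n:ℝ)) :=
          Real.exp_le_exp.mpr (by linarith)
      _ < ε := by
          rw [← Real.exp_log hε]
          exact Real.exp_lt_exp.mpr (by linarith)
  · -- lower log bound
    refine ⟨min a (-(b * Real.log (1 + Real.exp (T 2)))), b, hb, ?_⟩
    intro t ht
    rcases le_or_gt (Real.exp (T 2)) t with hlarge | hsmall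
    · have htpos : 0 < t := lt_of_lt_of_le (Real.exp_pos _) hlarge
      have h12 : T 1 + 1 ≤ T 2 := by have := hT.one_le 1; linarith
      have hT2log : T 2 ≤ Real.log t := (Real.le_log_iff_exp_le htpos).mpr hlarge
      have hs : T (0+1) < Real.log t := by simpa using (by linarith : T 1 < Real.log t)
      have h := hub 0 (Real.log t) hs
      rw [Real.exp_log htpos] at h
      push_cast at h
      have hexple : Real.exp (-((0:ℝ)+1)) * σ t ≤ 1 * σ t := by
        apply mul_le_mul_of_nonneg_right ?_ (hσ_pos t).le
        rw [← Real.exp_zero]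
        exact Real.exp_le_exp.mpr (by norm_num)
      have hσω : ω t ≤ σ t := by rw [one_mul] at hexple; linarith
      have hωlb := hγ' t ht
      have hmin : min a (-(b * Real.log (1 + Real.exp (T 2)))) ≤ a := min_le_left _ _
      linarith
    · have hlog : Real.log (1+t) ≤ Real.log (1 + Real.exp (T 2)) :=
        Real.log_le_log (by linarith) (by linarith)
      have hminr : min a (-(b * Real.log (1 + Real.exp (T 2)))) ≤
          -(b * Real.log (1 + Real.exp (T 2))) := min_le_right _ _
      have h2 : b * Real.log (1+t) ≤ b * Real.log (1 + Real.exp (T 2)) :=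
        mul_le_mul_of_nonneg_left hlog hb.le
      have h3 := (hσ_pos t).le
      linarith
  · -- convexity of σ ∘ exp
    have hfun : (fun s : ℝ => σ (Real.exp s)) = fun s => Real.exp (FF hT (max s (T 1))) :=
      funext hσexp
    rw [hfun]
    refine ⟨convex_univ, ?_⟩
    intro x _ y _ p q hp hq hpq
    simp only [smul_eq_mul]
    have h1 : max (p*x + q*y) (T 1) ≤ p * max x (T 1) + q * max y (T 1) := by
      apply max_le
      · exact add_le_add (mul_le_mul_of_nonneg_left (le_max_left _ _) hp)
          (mul_le_mul_of_nonneg_left (le_max_left _ _) hq)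
      · calc T 1 = p * T 1 + q * T 1 := by rw [← add_mul, hpq, one_mul]
          _ ≤ p * max x (T 1) + q * max y (T 1) :=
            add_le_add (mul_le_mul_of_nonneg_left (le_max_right _ _) hp)
              (mul_le_mul_of_nonneg_left (le_max_right _ _) hq)
    have h2 : FF hT (max (p*x+q*y) (T 1)) ≤ p * FF hT (max x (T 1)) + q * FF hT (max y (T 1)) := by
      refine le_trans (FF_mono hT h1) ?_
      have := (FF_convex hT).2 (Set.mem_univ (max x (T 1))) (Set.mem_univ (max y (T 1))) hp hq hpq
      simpa [smul_eq_mul] using this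
    calc Real.exp (FF hT (max (p*x+q*y) (T 1)))
        ≤ Real.exp (p * FF hT (max x (T 1)) + q * FF hT (max y (T 1))) :=
          Real.exp_le_exp.mpr h2
      _ ≤ p * Real.exp (FF hT (max x (T 1))) + q * Real.exp (FF hT (max y (T 1))) := by
          have := convexOn_exp.2 (Set.mem_univ (FF hT (max x (T 1))))
            (Set.mem_univ (FF hT (max y (T 1)))) hp hq hpq
          simpa [smul_eq_mul] using this
  · -- subadditivity
    have hanti : ∀ x y : ℝ, 0 < x → x ≤ y → x * σ y ≤ y * σ x := by
      intro x y hx hxy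
      have hy : 0 < y := lt_of_lt_of_le hx hxy
      have hMxy : max x c ≤ max y c := max_le_max hxy le_rfl
      have hexpc : Real.exp (-(rho hT (Real.log (max y c)))) ≤
          Real.exp (-(rho hT (Real.log (max x c)))) :=
        Real.exp_le_exp.mpr (neg_le_neg (rho_mono hT (Real.log_le_log (hmaxpos x) hMxy)))
      have hxMy : x * max y c ≤ y * max x c := by
        rcases le_total c x with h1 | h1
        · rcases le_total c y with h2 | h2
          · rw [max_eq_left h1, max_eq_left h2]; nlinarith
          · rw [max_eq_left h1, max_eq_right h2]; nlinarith
        · rcases le_total c y with h2 | h2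
          · rw [max_eq_right h1, max_eq_left h2]; nlinarith
          · rw [max_eq_right h1, max_eq_right h2]; nlinarith
      have h3 : (x * max y c) * Real.exp (-(rho hT (Real.log (max y c)))) ≤
          (y * max x c) * Real.exp (-(rho hT (Real.log (max x c)))) :=
        mul_le_mul hxMy hexpc (Real.exp_pos _).le
          (mul_nonneg hy.le (hmaxpos x).le)
      rw [hform x, hform y]
      nlinarith [h3]
    intro t₁ ht₁ t₂ ht₂
    rcases eq_or_lt_of_le ht₁ with h1 | h1
    · rw [← h1, zero_add]
      have := (hσ_pos 0).le
      linarith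
    rcases eq_or_lt_of_le ht₂ with h2 | h2
    · rw [← h2, add_zero]
      have := (hσ_pos 0).le
      linarith
    have ht : 0 < t₁ + t₂ := by linarith
    have e1 := hanti t₁ (t₁+t₂) h1 (by linarith)
    have e2 := hanti t₂ (t₁+t₂) h2 (by linarith)
    have hsum : (t₁ + t₂) * σ (t₁ + t₂) ≤ (t₁ + t₂) * (σ t₁ + σ t₂) := by nlinarith
    exact le_of_mul_le_mul_left hsum ht
  · -- ω / σ → 0
    rw [Metric.tendsto_atTop]
    intro ε hε
    obtain ⟨n, hn⟩ := exists_nat_gt (-Real.log ε)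
    refine ⟨Real.exp (T (n+1) + 1), ?_⟩
    intro t htN
    have htpos : 0 < t := lt_of_lt_of_le (Real.exp_pos _) htN
    have hlog : T (n+1) + 1 ≤ Real.log t := (Real.le_log_iff_exp_le htpos).mpr htN
    have hTlt : T (n+1) < Real.log t := by linarith
    have h := hub n (Real.log t) hTlt
    rw [Real.exp_log htpos] at h
    have hωnn : 0 ≤ ω t := hnonneg t htpos.le
    have hσp := hσ_pos t
    have hdivle : ω t / σ t ≤ Real.exp (-((n:ℝ)+1)) := by
      rw [div_le_iff₀ hσp]
      linarith
    rw [Real.dist_eq, sub_zero, abs_of_nonneg (by positivity)]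
    calc ω t / σ t ≤ Real.exp (-((n:ℝ)+1)) := hdivle
      _ < ε := by
        rw [← Real.exp_log hε]
        exact Real.exp_lt_exp.mpr (by linarith)
end
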